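/- In G(de,e,2) with d ≥ 3, e ≥ 2, if (sr)^k ∈ H = ⟨s,t⟩ for some 0 ≤ k < e, where s = (-1,1 | (1 2)), r = (0,0 | (1 2)), t = (e,0 | id), then k = 0. -/

import Mathlib

/-- The wreath product `ZMod m ≀ Sₙ`: elements `(a | σ)` with `a : Fin n → ZMod m`
and `σ` a permutation of `{1,…,n}` (i.e. of `Fin n`). -/
structure W (m n : ℕ) : Type where
  a : Fin n → ZMod m
  p : Equiv.Perm (Fin n)

namespace W

lemma ext' {m n : ℕ} {x y : W m n} (h1 : x.a = y.a) (h2 : x.p = y.p) : x = y := by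
  cases x; cases y; cases h1; cases h2; rfl

instance (m n : ℕ) : Mul (W m n) :=
  ⟨fun x y => ⟨fun i => x.a i + y.a (x.p i), y.p * x.p⟩⟩

instance (m n : ℕ) : One (W m n) := ⟨⟨0, 1⟩⟩

instance (m n : ℕ) : Inv (W m n) :=
  ⟨fun x => ⟨fun i => -(x.a (x.p.symm i)), x.p⁻¹⟩⟩

lemma mul_def {m n : ℕ} (x y : W m n) :
    x * y = ⟨fun i => x.a i + y.a (x.p i), y.p * x.p⟩ := rfl

lemma one_def {m n : ℕ} : (1 : W m n) = ⟨0, 1⟩ := rfl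

lemma inv_def {m n : ℕ} (x : W m n) :
    x⁻¹ = ⟨fun i => -(x.a (x.p.symm i)), x.p⁻¹⟩ := rfl

/-- The wreath product group structure, with multiplication
`(a | σ)(b | τ) = (aᵢ + b_{σ(i)} | στ)` (where `στ` means: apply `σ` first). -/
instance (m n : ℕ) : Group (W m n) where
  mul_assoc x y z := by
    refine ext' (funext fun i => ?_) ?_
    · show (x.a i + y.a (x.p i)) + z.a ((y.p * x.p) i)
        = x.a i + (y.a (x.p i) + z.a (y.p (x.p i)))
      simp [Equiv.Perm.mul_apply, add_assoc]
    · show (z.p * (y.p * x.p)) = (z.p * y.p) * x.p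
      exact (mul_assoc _ _ _).symm
  one_mul x := by
    refine ext' (funext fun i => ?_) ?_
    · show 0 + x.a ((1 : Equiv.Perm (Fin _)) i) = x.a i; simp
    · show x.p * 1 = x.p; simp
  mul_one x := by
    refine ext' (funext fun i => ?_) ?_
    · show x.a i + 0 = x.a i; simp
    · show 1 * x.p = x.p; simp
  inv_mul_cancel x := by
    refine ext' (funext fun i => ?_) ?_
    · simp [mul_def, inv_def, one_def, Equiv.Perm.inv_def]
    · show x.p * x.p⁻¹ = 1; exact mul_inv_cancel _

end W

/-- The subgroup of `ZMod m ≀ Sₙ` of elements whose diagonal entries sum to `0 mod e`.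
For `m = d*e` this is the imprimitive complex reflection group `G(de,e,n)`. -/
def Gsub (m e n : ℕ) (h : e ∣ m) : Subgroup (W m n) where
  carrier := {x | ZMod.castHom h (ZMod e) (∑ i, x.a i) = 0}
  one_mem' := by simp [W.one_def]
  mul_mem' := by
    intro x y hx hy
    show ZMod.castHom h (ZMod e) (∑ i, (x.a i + y.a (x.p i))) = 0
    rw [Finset.sum_add_distrib, Equiv.sum_comp x.p y.a, map_add]
    rw [Set.mem_setOf_eq] at hx hy
    rw [hx, hy, add_zero]
  inv_mem' := by
    intro x hx
    show ZMod.castHom h (ZMod e) (∑ i, -(x.a (x.p.symm i))) = 0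
    rw [Finset.sum_neg_distrib, Equiv.sum_comp x.p.symm x.a, map_neg]
    rw [Set.mem_setOf_eq] at hx
    rw [hx, neg_zero]

lemma mem_Gsub {m e n : ℕ} (h : e ∣ m) (x : W m n) :
    x ∈ Gsub m e n h ↔ ZMod.castHom h (ZMod e) (∑ i, x.a i) = 0 := Iff.rfl

/-- The imprimitive complex reflection group `G(de,e,n)`. -/
abbrev Gde (d e n : ℕ) : Subgroup (W (d * e) n) := Gsub (d * e) e n (dvd_mul_left e d)

/-- A Hamiltonian cycle in the (undirected, right) Cayley graph `Γ(G,S)`,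
encoded as the list of edge labels (from `S ∪ S⁻¹`) along the cycle starting at `1`:
the partial products visit every element of `G` exactly once and the
total product returns to `1`. -/
def IsHamCycle {G : Type*} [Group G] (S : Set G) (l : List G) : Prop :=
  (∀ x ∈ l, x ∈ S ∨ x⁻¹ ∈ S) ∧ l.prod = 1 ∧ l.length = Nat.card G ∧
    ((List.range l.length).map fun k => (l.take k).prod).Nodup

/-! Reducing the entries modulo `e` kills `t = (e, 0 | id)` and sends `s` to the involution
`(-1, 1 | (1 2))` of `G(e, e, 2)`, so `H` maps into `{1, s̄}`. The image of `(sr)^k = (-k, k | id)`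
has trivial permutation part, hence is `1`; thus `e ∣ k`, and `k < e` forces `k = 0`. -/

lemma eq_one_of_mem_zpowers_of_mul_self_eq_one {G : Type*} [Group G] {g x : G} (hg : g * g = 1)
    (hx : x ∈ Subgroup.zpowers g) (hxg : x ≠ g) : x = 1 := by
  obtain ⟨n, rfl⟩ := hx
  obtain ⟨j, rfl | rfl⟩ := Int.even_or_odd' n
  · simp only [zpow_mul, zpow_two, hg, one_zpow]
  · simp only [zpow_add, zpow_mul, zpow_two, hg, one_zpow, one_mul, zpow_one] at hxg
    exact absurd rfl hxg

namespace W

variable {m m' n : ℕ}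

def map (f : ZMod m →+ ZMod m') : W m n →* W m' n where
  toFun x := ⟨f ∘ x.a, x.p⟩
  map_one' := ext' (funext fun _ => map_zero f) rfl
  map_mul' _ _ := ext' (funext fun _ => map_add f _ _) rfl

@[simp] lemma map_mk_two (f : ZMod m →+ ZMod m') (a b : ZMod m) (σ : Equiv.Perm (Fin 2)) :
    map f ⟨![a, b], σ⟩ = ⟨![f a, f b], σ⟩ := by
  show (⟨f ∘ ![a, b], σ⟩ : W m' 2) = _
  rw [← FinVec.map_eq]
  rfl

lemma mk_one_pow (v : Fin n → ZMod m) (k : ℕ) : (⟨v, 1⟩ : W m n) ^ k = ⟨k • v, 1⟩ := by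
  induction k with
  | zero => exact ext' (zero_nsmul v).symm rfl
  | succ k ih =>
    rw [pow_succ, ih, mul_def]
    exact ext' (funext fun i => (succ_nsmul v k ▸ rfl)) (mul_one 1)

lemma mk_swap_mul_self (a : ZMod m) :
    (⟨![-a, a], Equiv.swap 0 1⟩ : W m 2) * ⟨![-a, a], Equiv.swap 0 1⟩ = 1 := by
  refine ext' (funext fun i => ?_) (Equiv.swap_mul_self 0 1)
  fin_cases i <;> simp [mul_def, one_def]

lemma eq_zero_of_mk_one_mem_zpowers_swap {v : Fin 2 → ZMod m} {a : ZMod m}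
    (h : (⟨v, 1⟩ : W m 2) ∈ Subgroup.zpowers ⟨![-a, a], Equiv.swap 0 1⟩) : v = 0 := by
  have hne : (⟨v, 1⟩ : W m 2) ≠ ⟨![-a, a], Equiv.swap 0 1⟩ := fun hv =>
    absurd (congrArg W.p hv).symm (Equiv.swap_eq_one_iff.not.mpr zero_ne_one)
  exact congrArg W.a (eq_one_of_mem_zpowers_of_mul_self_eq_one (mk_swap_mul_self a) h hne)

end W

theorem stmt14_general (d e : ℕ)
    (s t r : Gde d e 2)
    (hs : (s : W (d * e) 2) = ⟨![-1, 1], Equiv.swap 0 1⟩)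
    (ht : (t : W (d * e) 2) = ⟨![(e : ZMod (d * e)), 0], 1⟩)
    (hr : (r : W (d * e) 2) = ⟨![0, 0], Equiv.swap 0 1⟩)
    (H : Subgroup (Gde d e 2)) (hH : H = Subgroup.closure {s, t}) :
    ∀ k < e, (s * r) ^ k ∈ H → k = 0 := by
  intro k hk hmem
  let reduce : Gde d e 2 →* W e 2 :=
    (W.map (ZMod.castHom (dvd_mul_left e d) (ZMod e) : ZMod (d * e) →+ ZMod e)).comp
      (Gde d e 2).subtype
  have hsr : ((s * r : Gde d e 2) : W (d * e) 2) = ⟨![-1, 1], 1⟩ := by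
    refine W.ext' (funext fun i => ?_) (by simp [W.mul_def, hs, hr])
    fin_cases i <;> simp [W.mul_def, hs, hr]
  have ht_one : reduce t = 1 := by
    refine W.ext' (funext fun i => ?_) (by simp [reduce, ht, W.one_def])
    fin_cases i <;> simp [reduce, ht, W.one_def]
  have hH_le : H ≤ (Subgroup.zpowers ⟨![-1, 1], Equiv.swap 0 1⟩).comap reduce := by
    rw [hH, Subgroup.closure_le]
    rintro x (rfl | rfl)
    · simp [reduce, hs]
    · simp [ht_one]
  have hk_zero : (k : ZMod e) = 0 := by
    have h := W.eq_zero_of_mk_one_mem_zpowers_swap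
      (by simpa [reduce, hsr, W.mk_one_pow] using hH_le hmem)
    simpa using congrFun h 1
  exact Nat.eq_zero_of_dvd_of_lt ((ZMod.natCast_eq_zero_iff _ _).mp hk_zero) hk

/-- from Lemma 4.4. In `G(de,e,2)` with `d ≥ 3`, `e ≥ 2`, if
`(sr)^k ∈ H = ⟨s,t⟩` for some `0 ≤ k < e`, where `s = (-1,1 | (1 2))`,
`r = (0,0 | (1 2))`, `t = (e,0 | id)`, then `k = 0`. -/
theorem stmt14 (d e : ℕ) (hd : 3 ≤ d) (he : 2 ≤ e)
    (s t r : Gde d e 2)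
    (hs : (s : W (d * e) 2) = ⟨![-1, 1], Equiv.swap 0 1⟩)
    (ht : (t : W (d * e) 2) = ⟨![(e : ZMod (d * e)), 0], 1⟩)
    (hr : (r : W (d * e) 2) = ⟨![0, 0], Equiv.swap 0 1⟩)
    (H : Subgroup (Gde d e 2)) (hH : H = Subgroup.closure {s, t}) :
    ∀ k < e, (s * r) ^ k ∈ H → k = 0 :=
  stmt14_general d e s t r hs ht hr H hH
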